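/- arXiv:2411.03277 — 4 statements merged into one kernel-verified Lean document; each statement's English description precedes it below -/
import Mathlib

section
/- Let φ : ℝ≥0 × ℝ → ℝ be a semiflow on the real line such that φ(t,0) = 0 for all t ≥ 0, each time-t map φ(t,·) : ℝ → ℝ is injective, and every trajectory converges to the origin, i.e., φ(t,x) → 0 as t → +∞ for every x ∈ ℝ. Then for every t > 0: if x > 0 then 0 < φ(t,x) < x, and if x < 0 then x < φ(t,x) < 0. Consequently, for every s ∈ (0,1) and every x ≠ 0, the homotopy vector field H(s,x) = (1/s)·(φ(s/(1-s), x) - x) satisfies x·H(s,x) < 0; that is, for n = 1 the homotopy H from a GAS vector field to -x preserves global asymptotic stability of the origin because the sign of H(s,·) cannot flip. -/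
/-!
Each time-`t` map is a continuous injection of `ℝ` fixing `0`, hence strictly monotone. It is
increasing because, by the intermediate value theorem in time, a trajectory never reaches the
equilibrium `0` and so keeps its sign. If `φ t` did not move some `x ≠ 0` strictly towards `0`,
monotonicity would make the orbit `(φ t)^[n] x = φ (n • t) x` monotone away from `0`, contradicting
attractivity. The sign of `H` then follows since `1 / s > 0`.
-/

open scoped NNReal
open Filter Topology

section Iterate

variable {α : Type*} [TopologicalSpace α] [LinearOrder α] [OrderClosedTopology α]
  {g : α → α} {x a : α}

theorem Monotone.map_lt_self_of_tendsto_iterate (hg : Monotone g)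
    (hlim : Tendsto (fun n => g^[n] x) atTop (𝓝 a)) (hax : a < x) : g x < x := by
  by_contra! hx
  exact hax.not_ge ((hg.monotone_iterate_of_le_map hx).ge_of_tendsto hlim 0)

theorem Monotone.lt_map_self_of_tendsto_iterate (hg : Monotone g)
    (hlim : Tendsto (fun n => g^[n] x) atTop (𝓝 a)) (hxa : x < a) : x < g x := by
  by_contra! hx
  exact hxa.not_ge ((hg.antitone_iterate_of_map_le hx).le_of_tendsto hlim 0)

end Iterate

theorem flow_iterate {M X : Type*} [AddMonoid M] {φ : M → X → X} (hzero : ∀ x, φ 0 x = x)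
    (hsemigroup : ∀ s t x, φ s (φ t x) = φ (s + t) x) (t : M) (n : ℕ) :
    (φ t)^[n] = φ (n • t) := by
  induction n with
  | zero => funext x; simp [hzero]
  | succ n ih => funext x; rw [Function.iterate_succ_apply', ih, hsemigroup, succ_nsmul']

theorem tendsto_flow_iterate {X : Type*} [TopologicalSpace X] {φ : ℝ≥0 → X → X} {p : X}
    (hzero : ∀ x, φ 0 x = x) (hsemigroup : ∀ s t x, φ s (φ t x) = φ (s + t) x)
    (hattr : ∀ x, Tendsto (fun t => φ t x) atTop (𝓝 p)) {t : ℝ≥0} (ht : 0 < t) (x : X) :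
    Tendsto (fun n : ℕ => (φ t)^[n] x) atTop (𝓝 p) := by
  simp only [flow_iterate hzero hsemigroup]
  exact (hattr x).comp (tendsto_id.atTop_nsmul_const ht)

section ScalarFlow

variable {φ : ℝ≥0 → ℝ → ℝ}

theorem flow_pos_of_pos (hcont : Continuous fun p : ℝ≥0 × ℝ => φ p.1 p.2)
    (hzero : ∀ x, φ 0 x = x) (horigin : ∀ t, φ t 0 = 0)
    (hinj : ∀ t, Function.Injective (φ t)) (t : ℝ≥0) {x : ℝ} (hx : 0 < x) : 0 < φ t x := by
  by_contra! ht
  have horbit : Continuous fun s => φ s x := hcont.comp (.prodMk_left x)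
  obtain ⟨c, hc⟩ := intermediate_value_univ t 0 horbit ⟨ht, (hzero x).symm ▸ hx.le⟩
  exact ((hinj c).ne_iff' (horigin c)).mpr hx.ne' hc

theorem flow_strictMono (hcont : Continuous fun p : ℝ≥0 × ℝ => φ p.1 p.2)
    (hzero : ∀ x, φ 0 x = x) (horigin : ∀ t, φ t 0 = 0)
    (hinj : ∀ t, Function.Injective (φ t)) (t : ℝ≥0) : StrictMono (φ t) := by
  have hmap : Continuous (φ t) := hcont.comp (.prodMk_right t)
  refine (hmap.strictMono_of_inj (hinj t)).resolve_right fun hanti => ?_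
  have h := hanti zero_lt_one
  rw [horigin] at h
  exact h.not_gt (flow_pos_of_pos hcont hzero horigin hinj t one_pos)

end ScalarFlow

theorem scalar_flow_homotopy_preserves_stability
    (φ : ℝ≥0 → ℝ → ℝ)
    (hcont : Continuous fun p : ℝ≥0 × ℝ => φ p.1 p.2)
    (hzero : ∀ x : ℝ, φ 0 x = x)
    (hsemigroup : ∀ (s t : ℝ≥0) (x : ℝ), φ s (φ t x) = φ (s + t) x)
    (horigin : ∀ t : ℝ≥0, φ t 0 = 0)
    (hinj : ∀ t : ℝ≥0, Function.Injective (φ t))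
    (hattr : ∀ x : ℝ, Tendsto (fun t : ℝ≥0 => φ t x) atTop (nhds 0)) :
    (∀ t : ℝ≥0, 0 < t → ∀ x : ℝ,
      (0 < x → 0 < φ t x ∧ φ t x < x) ∧ (x < 0 → x < φ t x ∧ φ t x < 0)) ∧
    ∀ s ∈ Set.Ioo (0:ℝ) 1, ∀ x : ℝ, x ≠ 0 →
      x * ((1/s) * (φ ((s / (1 - s)).toNNReal) x - x)) < 0 := by
  have hmono : ∀ t, StrictMono (φ t) := flow_strictMono hcont hzero horigin hinj
  have hlim : ∀ t, 0 < t → ∀ x, Tendsto (fun n : ℕ => (φ t)^[n] x) atTop (𝓝 0) :=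
    fun _ ht => tendsto_flow_iterate hzero hsemigroup hattr ht
  have hsign : ∀ t : ℝ≥0, 0 < t → ∀ x : ℝ,
      (0 < x → 0 < φ t x ∧ φ t x < x) ∧ (x < 0 → x < φ t x ∧ φ t x < 0) := fun t ht x =>
    ⟨fun hx => ⟨horigin t ▸ hmono t hx,
        (hmono t).monotone.map_lt_self_of_tendsto_iterate (hlim t ht x) hx⟩,
      fun hx => ⟨(hmono t).monotone.lt_map_self_of_tendsto_iterate (hlim t ht x) hx,
        horigin t ▸ hmono t hx⟩⟩
  refine ⟨hsign, fun s ⟨hs0, hs1⟩ x hx => ?_⟩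
  have ht : 0 < (s / (1 - s)).toNNReal := Real.toNNReal_pos.mpr (div_pos hs0 (sub_pos.mpr hs1))
  rw [mul_left_comm]
  refine mul_neg_of_pos_of_neg (one_div_pos.mpr hs0) ?_
  rcases hx.lt_or_gt with hneg | hpos
  · exact mul_neg_of_neg_of_pos hneg (sub_pos.mpr ((hsign _ ht x).2 hneg).1)
  · exact mul_neg_of_pos_of_neg hpos (sub_neg.mpr ((hsign _ ht x).1 hpos).2)
end

section
/- Let A be an n×n complex matrix all of whose eigenvalues (complex roots of its characteristic polynomial) have strictly negative real part. Then for every τ > 0 and every s ∈ (0,1], every eigenvalue of the matrix (1/s)·(exp(τ·A) - I) has strictly negative real part. (Indeed, each eigenvalue of exp(τ·A) - I has the form e^{τλ} - 1 with λ an eigenvalue of A, and |e^{τλ}| = e^{τ·Re λ} < 1 implies Re(e^{τλ} - 1) < 0.) Hence, for a Hurwitz matrix A, the canonical homotopy H(s,x) = (1/s)(φ^{s/(1-s)}(x) - x) between ẋ = Ax and ẋ = -x passes only through Hurwitz linear vector fields, so stability is preserved throughout the homotopy. -/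
/-!
`M = (1/s) • (exp (τ • A) - 1)` commutes with `A`, so an eigenvalue `z` of `M` has an eigenvector
`v` that is also an eigenvector of `A`, say `A *ᵥ v = μ • v`. Then `exp (τ • A) *ᵥ v = exp (τ μ) • v`,
so `z = (1/s) (exp (τ μ) - 1)`, and `|exp (τ μ)| = exp (τ Re μ) < 1` forces `Re z < 0`.
-/

open NormedSpace Matrix Module.End

theorem NormedSpace.exp_mul_of_mul_eq_smul {𝕂 𝔸 : Type*} [RCLike 𝕂] [NormedRing 𝔸]
    [NormedAlgebra 𝕂 𝔸] [CompleteSpace 𝔸] {a x : 𝔸} {μ : 𝕂} (h : a * x = μ • x) :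
    exp a * x = exp μ • x := by
  let : NormedAlgebra ℚ 𝔸 := .restrictScalars ℚ 𝕂 𝔸
  have hsemi : SemiconjBy x (algebraMap 𝕂 𝔸 μ) a := by
    rw [SemiconjBy, h, ← Algebra.commutes, Algebra.smul_def]
  rw [← hsemi.exp_right.eq, ← algebraMap_exp_comm, ← Algebra.commutes, Algebra.smul_def]

theorem Matrix.exp_mulVec_of_mulVec_eq_smul {𝕂 m : Type*} [RCLike 𝕂] [Fintype m]
    [DecidableEq m] {B : Matrix m m 𝕂} {v : m → 𝕂} {μ : 𝕂} (h : B *ᵥ v = μ • v) :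
    exp B *ᵥ v = exp μ • v := by
  -- `v` is a column of the square matrix `replicateCol m v`, to which the algebra lemma applies.
  have hcol : exp B * replicateCol m v = exp μ • replicateCol m v :=
    open scoped Norms.Operator in
    exp_mul_of_mul_eq_smul (by rw [← replicateCol_mulVec, h, replicateCol_smul])
  rw [← replicateCol_mulVec, ← replicateCol_smul] at hcol
  exact funext fun i => congrFun (congrFun hcol i) i

theorem Module.End.exists_hasEigenvector_of_commute {K V : Type*} [Field K] [IsAlgClosed K]
    [AddCommGroup V] [Module K V] [FiniteDimensional K V] {f g : End K V} (hfg : Commute f g)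
    {μ : K} (hμ : f.HasEigenvalue μ) : ∃ ν v, f.HasEigenvector μ v ∧ g.HasEigenvector ν v := by
  have hmaps : Set.MapsTo g (f.eigenspace μ) (f.eigenspace μ) :=
    mapsTo_genEigenspace_of_comm hfg μ 1
  have : Nontrivial (f.eigenspace μ) := Submodule.nontrivial_iff_ne_bot.mpr hμ
  obtain ⟨ν, hν⟩ := exists_eigenvalue (g.restrict hmaps)
  obtain ⟨w, hw⟩ := hν.exists_hasEigenvector
  have hw0 : (w : V) ≠ 0 := by simpa using hw.2
  exact ⟨ν, w, hasEigenvector_iff.mpr ⟨w.2, hw0⟩,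
    hasEigenvector_iff.mpr ⟨mem_eigenspace_iff.mpr (congrArg Subtype.val hw.apply_eq_smul), hw0⟩⟩

theorem Matrix.exists_common_eigenvector_of_commute {K n : Type*} [Field K] [IsAlgClosed K]
    [Fintype n] [DecidableEq n] {A M : Matrix n n K} (h : Commute A M) {z : K}
    (hz : M.charpoly.IsRoot z) :
    ∃ μ v, A.charpoly.IsRoot μ ∧ v ≠ 0 ∧ A *ᵥ v = μ • v ∧ M *ᵥ v = z • v := by
  have hM : HasEigenvalue (toLin' M) z := by
    rwa [hasEigenvalue_iff_isRoot_charpoly, charpoly_toLin']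
  obtain ⟨μ, v, hMv, hAv⟩ := exists_hasEigenvector_of_commute (h.symm.map toLinAlgEquiv') hM
  refine ⟨μ, v, ?_, hAv.2, ?_, ?_⟩
  · rw [← charpoly_toLin', ← hasEigenvalue_iff_isRoot_charpoly]
    exact hasEigenvalue_of_hasEigenvector hAv
  · simpa [toLin'_apply] using hAv.apply_eq_smul
  · simpa [toLin'_apply] using hMv.apply_eq_smul

theorem Complex.re_exp_lt_one {z : ℂ} (hz : z.re < 0) : (exp z).re < 1 :=
  calc (exp z).re ≤ ‖exp z‖ := re_le_norm _
    _ = Real.exp z.re := norm_exp z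
    _ < 1 := Real.exp_lt_one_iff.mpr hz

theorem canonical_homotopy_of_Hurwitz_matrix_stays_Hurwitz
    {n : ℕ} (A : Matrix (Fin n) (Fin n) ℂ)
    (hA : ∀ z : ℂ, A.charpoly.IsRoot z → z.re < 0) :
    ∀ τ : ℝ, 0 < τ → ∀ s ∈ Set.Ioc (0:ℝ) 1,
      ∀ z : ℂ, (((1/s : ℝ) : ℂ) •
          (NormedSpace.exp ((τ : ℂ) • A) - 1)).charpoly.IsRoot z → z.re < 0 := by
  intro τ hτ s hs z hz
  have hcomm : Commute A (((1/s : ℝ) : ℂ) • (exp ((τ : ℂ) • A) - 1)) :=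
    (((Commute.refl A).smul_right _).exp_right.sub_right (Commute.one_right A)).smul_right _
  obtain ⟨μ, v, hμ, hv, hAv, hMv⟩ := exists_common_eigenvector_of_commute hcomm hz
  have hexp : exp ((τ : ℂ) • A) *ᵥ v = exp ((τ : ℂ) * μ) • v :=
    exp_mulVec_of_mulVec_eq_smul (by rw [smul_mulVec, hAv, smul_smul])
  have hz_eq : z = ((1/s : ℝ) : ℂ) * (Complex.exp (τ * μ) - 1) := by
    refine smul_left_injective ℂ hv ?_
    simp only [← hMv, smul_mulVec, sub_mulVec, one_mulVec, hexp, Complex.exp_eq_exp_ℂ, sub_smul,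
      one_smul, mul_smul]
  have hre : ((τ : ℂ) * μ).re < 0 := by
    rw [Complex.re_ofReal_mul]
    exact mul_neg_of_pos_of_neg hτ (hA μ hμ)
  rw [hz_eq, Complex.re_ofReal_mul, Complex.sub_re, Complex.one_re]
  exact mul_neg_of_pos_of_neg (one_div_pos.mpr hs.1) (sub_neg.mpr (Complex.re_exp_lt_one hre))
end

section
/- Consider the function v_i : ℝ → ℝ defined by v_i(x) = ½x² + (3/2)·sin²(x). Then: (a) v_i(0) = 0 and v_i(x) > 0 for every x ≠ 0, so 0 is the unique global minimizer of v_i; (b) v_i is coercive: v_i(x) → +∞ as |x| → +∞; and (c) v_i is invex in the strong sense that its derivative v_i'(x) = x + (3/2)·sin(2x) vanishes only at x = 0, i.e., every critical point of v_i is the global minimizer. -/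
open Filter

/-- The coercive invex function `v_i(x) = x²/2 + (3/2) sin²(x)`. -/
noncomputable def vi (x : ℝ) : ℝ := (1/2) * x^2 + (3/2) * (Real.sin x)^2

open Real

/-- On `(0, π/2]` the sine term is nonnegative; beyond `π/2` it cannot pull `x` below `x - c`. -/
lemma add_mul_sin_two_mul_pos {c x : ℝ} (hc₀ : 0 ≤ c) (hc : c ≤ π / 2) (hx : 0 < x) :
    0 < x + c * sin (2 * x) := by
  rcases le_or_gt x (π / 2) with hle | hgt
  · have hsin : 0 ≤ sin (2 * x) := sin_nonneg_of_nonneg_of_le_pi (by linarith) (by linarith)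
    nlinarith
  · nlinarith [neg_one_le_sin (2 * x)]

lemma eq_zero_of_add_mul_sin_two_mul_eq_zero {c x : ℝ} (hc₀ : 0 ≤ c) (hc : c ≤ π / 2)
    (h : x + c * sin (2 * x) = 0) : x = 0 := by
  rcases lt_trichotomy x 0 with hneg | hzero | hpos
  · have hpos' := add_mul_sin_two_mul_pos hc₀ hc (neg_pos.mpr hneg)
    rw [mul_neg, sin_neg] at hpos'
    linarith
  · exact hzero
  · linarith [add_mul_sin_two_mul_pos hc₀ hc hpos]

lemma half_sq_le_vi (x : ℝ) : 1 / 2 * x ^ 2 ≤ vi x := by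
  unfold vi
  nlinarith [sq_nonneg (sin x)]

lemma vi_pos {x : ℝ} (hx : x ≠ 0) : 0 < vi x :=
  (by positivity : (0 : ℝ) < 1 / 2 * x ^ 2).trans_le (half_sq_le_vi x)

lemma tendsto_vi_cocompact : Tendsto vi (cocompact ℝ) atTop := by
  have hsq : Tendsto (fun x : ℝ => 1 / 2 * x ^ 2) (cocompact ℝ) atTop := by
    simpa only [Function.comp_def, norm_eq_abs, sq_abs] using
      ((tendsto_pow_atTop two_ne_zero).comp (tendsto_norm_cocompact_atTop (E := ℝ))).const_mul_atTop
        (by norm_num : (0 : ℝ) < 1 / 2)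
  exact tendsto_atTop_mono half_sq_le_vi hsq

lemma hasDerivAt_vi (x : ℝ) : HasDerivAt vi (x + 3 / 2 * sin (2 * x)) x := by
  have hsq : HasDerivAt (fun x : ℝ => 1 / 2 * x ^ 2) x x := by
    simpa using (hasDerivAt_pow 2 x).const_mul (1 / 2 : ℝ)
  have hsin_sq : HasDerivAt (fun x : ℝ => 3 / 2 * sin x ^ 2) (3 / 2 * sin (2 * x)) x := by
    refine (((hasDerivAt_sin x).pow 2).const_mul (3 / 2 : ℝ)).congr_deriv ?_
    rw [sin_two_mul]
    ring
  exact hsq.add hsin_sq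

theorem vi_is_coercive_and_invex :
    (vi 0 = 0 ∧ ∀ x : ℝ, x ≠ 0 → 0 < vi x) ∧
    Tendsto vi (cocompact ℝ) atTop ∧
    (∀ x : ℝ, HasDerivAt vi (x + (3/2) * Real.sin (2*x)) x) ∧
    (∀ x : ℝ, x + (3/2) * Real.sin (2*x) = 0 → x = 0) := by
  have hc : (3 / 2 : ℝ) ≤ π / 2 := by linarith [pi_gt_three]
  exact ⟨⟨by simp [vi], fun _ => vi_pos⟩, tendsto_vi_cocompact, hasDerivAt_vi,
    fun _ => eq_zero_of_add_mul_sin_two_mul_eq_zero (by norm_num) hc⟩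
end

section
/- Gaussian optimal transport interpolation preserves positive definiteness: let Σ₀ and Σ₁ be symmetric positive definite n×n real matrices, let Σ₀^{1/2} denote the positive definite square root of Σ₀, let B denote the positive definite square root of Σ₀^{1/2}·Σ₁·Σ₀^{1/2}, and set A = Σ₀^{-1/2}·B·Σ₀^{-1/2} (the optimal transport map between the centered Gaussians with covariances Σ₀ and Σ₁ is x ↦ Ax). Then for every s ∈ [0,1]: (a) the interpolated covariance satisfies the identity ((1-s)·I + s·A)·Σ₀·((1-s)·I + s·A)ᵀ = Σ₀^{-1/2}·((1-s)·Σ₀ + s·B)²·Σ₀^{-1/2} =: Σ(s); and (b) Σ(s) is symmetric positive definite. -/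
/-! With `C = (1 - s) • Σ₀ + s • B`, the identity `S⁻¹ Σ₀ S⁻¹ = 1` turns the interpolating map
`(1 - s) • 1 + s • A` into the congruence `S⁻¹ C S⁻¹`, so it pushes `Σ₀ = S S` forward to
`S⁻¹ C² S⁻¹`. Positive definite matrices form a convex cone, so `C`, hence `C²`, is positive
definite, and congruence by the symmetric invertible `S⁻¹` preserves this. -/

open Matrix
open scoped ComplexOrder

namespace Matrix

section PosDef

variable {n 𝕜 : Type*} [RCLike 𝕜]

theorem convex_setOf_posDef : Convex ℝ {M : Matrix n n 𝕜 | M.PosDef} := by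
  intro M hM N hN a b ha hb hab
  rcases ha.eq_or_lt with rfl | ha
  · obtain rfl : b = 1 := by simpa using hab
    simpa using hN
  · exact (hM.smul ha).add_posSemidef (hN.posSemidef.smul hb)

variable [Fintype n] [DecidableEq n]

theorem PosDef.sq {M : Matrix n n 𝕜} (hM : M.PosDef) : (M ^ 2).PosDef := by
  rw [pow_two]
  simpa [hM.isHermitian.eq] using
    PosDef.conjTranspose_mul_self M (mulVec_injective_of_isUnit hM.isUnit)

theorem PosDef.mul_mul_of_isHermitian {X U : Matrix n n 𝕜} (hX : X.PosDef) (hU : U.IsHermitian)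
    (hU' : IsUnit U) : (U * X * U).PosDef := by
  simpa only [star_eq_conjTranspose, hU.eq] using
    (IsUnit.posDef_star_right_conjugate_iff hU').2 hX

end PosDef

section Congruence

variable {n R : Type*} [Fintype n] [DecidableEq n] [CommRing R] {S : Matrix n n R}

theorem inv_mul_mul_self_mul_inv (hS : IsUnit S) : S⁻¹ * (S * S) * S⁻¹ = 1 := by
  have hdet := (isUnit_iff_isUnit_det S).mp hS
  rw [← Matrix.mul_assoc, nonsing_inv_mul S hdet, Matrix.one_mul, mul_nonsing_inv S hdet]

theorem smul_one_add_smul_inv_mul_mul_inv (hS : IsUnit S) (a b : R) (X : Matrix n n R) :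
    a • 1 + b • (S⁻¹ * X * S⁻¹) = S⁻¹ * (a • (S * S) + b • X) * S⁻¹ := by
  rw [Matrix.mul_add, Matrix.add_mul, Matrix.mul_smul, Matrix.smul_mul, Matrix.mul_smul,
    Matrix.smul_mul, inv_mul_mul_self_mul_inv hS]

theorem inv_mul_mul_inv_mul_self_mul_inv_mul_mul_inv (hS : IsUnit S) (X Y : Matrix n n R) :
    S⁻¹ * X * S⁻¹ * (S * S) * (S⁻¹ * Y * S⁻¹) = S⁻¹ * (X * Y) * S⁻¹ := by
  have hdet := (isUnit_iff_isUnit_det S).mp hS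
  calc S⁻¹ * X * S⁻¹ * (S * S) * (S⁻¹ * Y * S⁻¹)
      = S⁻¹ * X * ((S⁻¹ * S) * (S * S⁻¹)) * Y * S⁻¹ := by simp only [Matrix.mul_assoc]
    _ = S⁻¹ * (X * Y) * S⁻¹ := by
      rw [nonsing_inv_mul S hdet, mul_nonsing_inv S hdet]
      simp only [Matrix.mul_one, Matrix.mul_assoc]

end Congruence

end Matrix

theorem gaussian_OT_interpolation_preserves_positive_definiteness_general
    {n : ℕ} (Sigma0 : Matrix (Fin n) (Fin n) ℝ)
    (hSigma0 : Sigma0.PosDef)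
    -- `S` is the positive definite square root of `Sigma0`
    (S : Matrix (Fin n) (Fin n) ℝ) (hS : S.PosDef) (hSsq : S * S = Sigma0)
    -- `B` is the positive definite square root of `S * Sigma1 * S`
    (B : Matrix (Fin n) (Fin n) ℝ) (hB : B.PosDef)
    -- the optimal transport map matrix
    (A : Matrix (Fin n) (Fin n) ℝ) (hA : A = S⁻¹ * B * S⁻¹) :
    ∀ s ∈ Set.Icc (0:ℝ) 1,
      ((1-s) • (1 : Matrix (Fin n) (Fin n) ℝ) + s • A) * Sigma0 *
          ((1-s) • (1 : Matrix (Fin n) (Fin n) ℝ) + s • A)ᵀ =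
        S⁻¹ * ((1-s) • Sigma0 + s • B)^2 * S⁻¹ ∧
      (S⁻¹ * ((1-s) • Sigma0 + s • B)^2 * S⁻¹).PosDef := by
  rintro s ⟨hs0, hs1⟩
  subst hSsq hA
  have hC : ((1 - s) • (S * S) + s • B).PosDef :=
    convex_setOf_posDef hSigma0 hB (sub_nonneg.2 hs1) hs0 (sub_add_cancel 1 s)
  have hSinv := hS.inv
  have hmap_symm : (S⁻¹ * ((1 - s) • (S * S) + s • B) * S⁻¹)ᵀ =
      S⁻¹ * ((1 - s) • (S * S) + s • B) * S⁻¹ := by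
    simpa only [conjTranspose_eq_transpose_of_trivial] using
      (hC.mul_mul_of_isHermitian hSinv.isHermitian hSinv.isUnit).isHermitian.eq
  refine ⟨?_, hC.sq.mul_mul_of_isHermitian hSinv.isHermitian hSinv.isUnit⟩
  rw [smul_one_add_smul_inv_mul_mul_inv hS.isUnit, hmap_symm,
    inv_mul_mul_inv_mul_self_mul_inv_mul_mul_inv hS.isUnit, sq]

theorem gaussian_OT_interpolation_preserves_positive_definiteness
    {n : ℕ} (Sigma0 Sigma1 : Matrix (Fin n) (Fin n) ℝ)
    (hSigma0 : Sigma0.PosDef) (hSigma1 : Sigma1.PosDef)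
    -- `S` is the positive definite square root of `Sigma0`
    (S : Matrix (Fin n) (Fin n) ℝ) (hS : S.PosDef) (hSsq : S * S = Sigma0)
    -- `B` is the positive definite square root of `S * Sigma1 * S`
    (B : Matrix (Fin n) (Fin n) ℝ) (hB : B.PosDef) (hBsq : B * B = S * Sigma1 * S)
    -- the optimal transport map matrix
    (A : Matrix (Fin n) (Fin n) ℝ) (hA : A = S⁻¹ * B * S⁻¹) :
    ∀ s ∈ Set.Icc (0:ℝ) 1,
      ((1-s) • (1 : Matrix (Fin n) (Fin n) ℝ) + s • A) * Sigma0 *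
          ((1-s) • (1 : Matrix (Fin n) (Fin n) ℝ) + s • A)ᵀ =
        S⁻¹ * ((1-s) • Sigma0 + s • B)^2 * S⁻¹ ∧
      (S⁻¹ * ((1-s) • Sigma0 + s • B)^2 * S⁻¹).PosDef :=
  gaussian_OT_interpolation_preserves_positive_definiteness_general Sigma0 hSigma0 S hS hSsq B hB A
    hA
end
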